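/- arXiv:cs/0509043 — 8 statements merged into one kernel-verified Lean document; each statement's English description precedes it below -/
import Mathlib

section
/- The power region P_SIR is log-convex: if p⁽¹⁾, p⁽²⁾ ∈ P_SIR have all components strictly positive and 0 ≤ α ≤ 1, then the vector p⁽ᵅ⁾ with components p_i⁽ᵅ⁾ = (p_i⁽¹⁾)^α (p_i⁽²⁾)^{1−α} also belongs to P_SIR. -/
open Matrix BigOperators

/-- Signal-to-interference ratio of user `i`. -/
noncomputable def SIR {K : ℕ} (A : Matrix (Fin K) (Fin K) ℝ) (C : Fin K → ℝ)
    (σ2 : ℝ) (p : Fin K → ℝ) (i : Fin K) : ℝ :=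
  A i i * p i / ((∑ j ∈ Finset.univ.erase i, A i j * p j) + C i * σ2)

/-- The power region. -/
noncomputable def PSIR {K : ℕ} (A : Matrix (Fin K) (Fin K) ℝ) (C : Fin K → ℝ)
    (σ2 : ℝ) (γ : Fin K → ℝ) : Set (Fin K → ℝ) :=
  {p | (∀ i, 0 ≤ p i) ∧ ∀ i, γ i ≤ SIR A C σ2 p i}

/-!
Write `I_i(p) = ∑_{j ≠ i} A_ij p_j + C_i σ²` for the interference-plus-noise seen by user `i`, so
that `p ∈ P_SIR` means `γ_i I_i(p) ≤ A_ii p_i`. By Hölder's inequality (with exponents `1/α` and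
`1/(1-α)`, the noise entering as one more summand), `I_i` is log-convex along geometric
interpolation: `I_i(p^α q^(1-α)) ≤ I_i(p)^α I_i(q)^(1-α)`. Interpolating the two constraints
`γ_i I_i(p) ≤ A_ii p_i` and `γ_i I_i(q) ≤ A_ii q_i` geometrically then gives the constraint for
`p^α q^(1-α)`.
-/

namespace Real

lemma rpow_mul_rpow_one_sub_self {x : ℝ} (hx : 0 ≤ x) (α : ℝ) : x ^ α * x ^ (1 - α) = x := by
  rw [← rpow_of_add_eq hx one_ne_zero (add_sub_cancel α 1), rpow_one]

lemma mul_rpow_mul_mul_rpow_one_sub {c x y : ℝ} (hc : 0 ≤ c) (hx : 0 ≤ x) (hy : 0 ≤ y)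
    (α : ℝ) : (c * x) ^ α * (c * y) ^ (1 - α) = c * (x ^ α * y ^ (1 - α)) := by
  rw [mul_rpow hc hx, mul_rpow hc hy, mul_mul_mul_comm, rpow_mul_rpow_one_sub_self hc]

lemma rpow_mul_rpow_one_sub_le_rpow_mul_rpow_one_sub {x y x' y' α : ℝ} (hx : 0 ≤ x) (hy : 0 ≤ y)
    (hxx' : x ≤ x') (hyy' : y ≤ y') (hα0 : 0 ≤ α) (hα1 : α ≤ 1) :
    x ^ α * y ^ (1 - α) ≤ x' ^ α * y' ^ (1 - α) :=
  mul_le_mul (rpow_le_rpow hx hxx' hα0) (rpow_le_rpow hy hyy' (sub_nonneg.mpr hα1))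
    (rpow_nonneg hy _) (rpow_nonneg (hx.trans hxx') _)

end Real

namespace Finset

variable {ι : Type*} (s : Finset ι) {a b : ι → ℝ} {α : ℝ}

lemma sum_rpow_mul_rpow_one_sub_le (ha : ∀ j ∈ s, 0 ≤ a j) (hb : ∀ j ∈ s, 0 ≤ b j)
    (hα0 : 0 ≤ α) (hα1 : α ≤ 1) :
    ∑ j ∈ s, a j ^ α * b j ^ (1 - α) ≤ (∑ j ∈ s, a j) ^ α * (∑ j ∈ s, b j) ^ (1 - α) := by
  rcases hα0.eq_or_lt with rfl | hα0
  · simp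
  rcases hα1.eq_or_lt with rfl | hα1
  · simp
  have hα1' : 1 - α ≠ 0 := (sub_pos.mpr hα1).ne'
  have H := Real.inner_le_Lp_mul_Lq_of_nonneg s (Real.HolderConjugate.inv_one_sub_inv hα0 hα1)
    (f := fun j => a j ^ α) (g := fun j => b j ^ (1 - α))
    (fun j hj => Real.rpow_nonneg (ha j hj) _) (fun j hj => Real.rpow_nonneg (hb j hj) _)
  rwa [sum_congr rfl fun j hj => Real.rpow_rpow_inv (ha j hj) hα0.ne',
    sum_congr rfl fun j hj => Real.rpow_rpow_inv (hb j hj) hα1', one_div, one_div,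
    inv_inv, inv_inv] at H

lemma sum_rpow_mul_rpow_one_sub_add_le (ha : ∀ j ∈ s, 0 ≤ a j) (hb : ∀ j ∈ s, 0 ≤ b j)
    {c : ℝ} (hc : 0 ≤ c) (hα0 : 0 ≤ α) (hα1 : α ≤ 1) :
    ∑ j ∈ s, a j ^ α * b j ^ (1 - α) + c ≤
      (∑ j ∈ s, a j + c) ^ α * (∑ j ∈ s, b j + c) ^ (1 - α) := by
  have elim_nonneg {f : ι → ℝ} (hf : ∀ j ∈ s, 0 ≤ f j) : ∀ o ∈ s.insertNone, 0 ≤ o.elim c f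
    | none, _ => hc
    | some j, hj => hf j (by simpa using hj)
  have H := sum_rpow_mul_rpow_one_sub_le s.insertNone (elim_nonneg ha) (elim_nonneg hb) hα0 hα1
  simp only [sum_insertNone, Option.elim, Real.rpow_mul_rpow_one_sub_self hc] at H
  rwa [add_comm c, add_comm c, add_comm c] at H

end Finset

noncomputable def interferencePlusNoise {K : ℕ} (A : Matrix (Fin K) (Fin K) ℝ) (C : Fin K → ℝ)
    (σ2 : ℝ) (p : Fin K → ℝ) (i : Fin K) : ℝ :=
  ∑ j ∈ Finset.univ.erase i, A i j * p j + C i * σ2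

section

variable {K : ℕ} {A : Matrix (Fin K) (Fin K) ℝ} {C : Fin K → ℝ} {σ2 : ℝ}

lemma interferencePlusNoise_pos (hA : ∀ i j, 0 ≤ A i j) (hC : ∀ i, 0 < C i) (hσ : 0 < σ2)
    {p : Fin K → ℝ} (hp : ∀ j, 0 ≤ p j) (i : Fin K) : 0 < interferencePlusNoise A C σ2 p i :=
  add_pos_of_nonneg_of_pos (Finset.sum_nonneg fun j _ => mul_nonneg (hA i j) (hp j))
    (mul_pos (hC i) hσ)

lemma le_SIR_iff_mul_interferencePlusNoise_le (hA : ∀ i j, 0 ≤ A i j) (hC : ∀ i, 0 < C i)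
    (hσ : 0 < σ2) {p : Fin K → ℝ} (hp : ∀ j, 0 ≤ p j) (g : ℝ) (i : Fin K) :
    g ≤ SIR A C σ2 p i ↔ g * interferencePlusNoise A C σ2 p i ≤ A i i * p i :=
  le_div_iff₀ (interferencePlusNoise_pos hA hC hσ hp i)

lemma interferencePlusNoise_rpow_mul_rpow_one_sub_le (hA : ∀ i j, 0 ≤ A i j)
    (hC : ∀ i, 0 < C i) (hσ : 0 < σ2) {p q : Fin K → ℝ} (hp : ∀ j, 0 ≤ p j)
    (hq : ∀ j, 0 ≤ q j) {α : ℝ} (hα0 : 0 ≤ α) (hα1 : α ≤ 1) (i : Fin K) :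
    interferencePlusNoise A C σ2 (fun j => p j ^ α * q j ^ (1 - α)) i ≤
      interferencePlusNoise A C σ2 p i ^ α * interferencePlusNoise A C σ2 q i ^ (1 - α) := by
  have H := Finset.sum_rpow_mul_rpow_one_sub_add_le (Finset.univ.erase i)
    (fun j _ => mul_nonneg (hA i j) (hp j)) (fun j _ => mul_nonneg (hA i j) (hq j))
    (mul_pos (hC i) hσ).le hα0 hα1
  simpa only [interferencePlusNoise, Real.mul_rpow_mul_mul_rpow_one_sub (hA i _) (hp _) (hq _)]
    using H

end

theorem power_region_log_convex_general {K : ℕ}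
    (A : Matrix (Fin K) (Fin K) ℝ) (C : Fin K → ℝ) (σ2 : ℝ) (γ : Fin K → ℝ)
    (hA : ∀ i j, 0 ≤ A i j)
    (hC : ∀ i, 0 < C i) (hσ : 0 < σ2) (hγ : ∀ i, 0 < γ i)
    (p₁ p₂ : Fin K → ℝ) (hp₁ : p₁ ∈ PSIR A C σ2 γ) (hp₂ : p₂ ∈ PSIR A C σ2 γ)
    (α : ℝ) (hα0 : 0 ≤ α) (hα1 : α ≤ 1) :
    (fun i => p₁ i ^ α * p₂ i ^ (1 - α)) ∈ PSIR A C σ2 γ := by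
  obtain ⟨hp₁nn, hp₁sir⟩ := hp₁
  obtain ⟨hp₂nn, hp₂sir⟩ := hp₂
  have hpnn : ∀ i, 0 ≤ p₁ i ^ α * p₂ i ^ (1 - α) := fun i =>
    mul_nonneg (Real.rpow_nonneg (hp₁nn i) _) (Real.rpow_nonneg (hp₂nn i) _)
  refine ⟨hpnn, fun i => ?_⟩
  set I := interferencePlusNoise A C σ2
  have h₁ := (le_SIR_iff_mul_interferencePlusNoise_le hA hC hσ hp₁nn _ i).mp (hp₁sir i)
  have h₂ := (le_SIR_iff_mul_interferencePlusNoise_le hA hC hσ hp₂nn _ i).mp (hp₂sir i)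
  have hI₁ := (interferencePlusNoise_pos hA hC hσ hp₁nn i).le
  have hI₂ := (interferencePlusNoise_pos hA hC hσ hp₂nn i).le
  rw [le_SIR_iff_mul_interferencePlusNoise_le hA hC hσ hpnn]
  calc γ i * I (fun j => p₁ j ^ α * p₂ j ^ (1 - α)) i
      ≤ γ i * (I p₁ i ^ α * I p₂ i ^ (1 - α)) :=
        mul_le_mul_of_nonneg_left
          (interferencePlusNoise_rpow_mul_rpow_one_sub_le hA hC hσ hp₁nn hp₂nn hα0 hα1 i) (hγ i).le
    _ = (γ i * I p₁ i) ^ α * (γ i * I p₂ i) ^ (1 - α) :=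
        (Real.mul_rpow_mul_mul_rpow_one_sub (hγ i).le hI₁ hI₂ α).symm
    _ ≤ (A i i * p₁ i) ^ α * (A i i * p₂ i) ^ (1 - α) :=
        Real.rpow_mul_rpow_one_sub_le_rpow_mul_rpow_one_sub (mul_nonneg (hγ i).le hI₁)
          (mul_nonneg (hγ i).le hI₂) h₁ h₂ hα0 hα1
    _ = A i i * (p₁ i ^ α * p₂ i ^ (1 - α)) :=
        Real.mul_rpow_mul_mul_rpow_one_sub (hA i i) (hp₁nn i) (hp₂nn i) α

/-- The power region is log-convex: the componentwise geometric interpolation of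
two strictly positive points of `P_SIR` is again in `P_SIR`. -/
theorem power_region_log_convex {K : ℕ} (hK : 1 ≤ K)
    (A : Matrix (Fin K) (Fin K) ℝ) (C : Fin K → ℝ) (σ2 : ℝ) (γ : Fin K → ℝ)
    (hA : ∀ i j, 0 ≤ A i j) (hAd : ∀ i, 0 < A i i)
    (hC : ∀ i, 0 < C i) (hσ : 0 < σ2) (hγ : ∀ i, 0 < γ i)
    (p₁ p₂ : Fin K → ℝ) (hp₁ : p₁ ∈ PSIR A C σ2 γ) (hp₂ : p₂ ∈ PSIR A C σ2 γ)
    (hp₁pos : ∀ i, 0 < p₁ i) (hp₂pos : ∀ i, 0 < p₂ i)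
    (α : ℝ) (hα0 : 0 ≤ α) (hα1 : α ≤ 1) :
    (fun i => p₁ i ^ α * p₂ i ^ (1 - α)) ∈ PSIR A C σ2 γ :=
  power_region_log_convex_general A C σ2 γ hA hC hσ hγ p₁ p₂ hp₁ hp₂ α hα0 hα1
end

section
/- For every user i, the SIR is log-concave along geometric interpolation: if p⁽¹⁾, p⁽²⁾ ∈ ℝ^K have all components strictly positive, 0 ≤ α ≤ 1, and p⁽ᵅ⁾ is defined componentwise by p_j⁽ᵅ⁾ = (p_j⁽¹⁾)^α (p_j⁽²⁾)^{1−α}, then SIR_i(p⁽ᵅ⁾) ≥ (SIR_i(p⁽¹⁾))^α (SIR_i(p⁽²⁾))^{1−α}. -/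
open Matrix BigOperators

/-- Finite-sum Hölder inequality with exponents `α, 1-α`. -/
lemma hoelder_sum {ι : Type*} (s : Finset ι) (f g : ι → ℝ)
    (hf : ∀ j ∈ s, 0 ≤ f j) (hg : ∀ j ∈ s, 0 ≤ g j)
    {α : ℝ} (hα0 : 0 ≤ α) (hα1 : α ≤ 1) :
    ∑ j ∈ s, f j ^ α * g j ^ (1 - α) ≤
      (∑ j ∈ s, f j) ^ α * (∑ j ∈ s, g j) ^ (1 - α) := by
  rcases eq_or_lt_of_le hα0 with h0 | h0
  · simp [← h0]
  rcases eq_or_lt_of_le hα1 with h1 | h1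
  · simp [h1]
  have h1α : 0 < 1 - α := by linarith
  set S := ∑ j ∈ s, f j with hS
  set T := ∑ j ∈ s, g j with hT
  have hSnn : 0 ≤ S := Finset.sum_nonneg hf
  have hTnn : 0 ≤ T := Finset.sum_nonneg hg
  rcases eq_or_lt_of_le hSnn with hS0 | hSpos
  · have : ∀ j ∈ s, f j = 0 := fun j hj =>
      le_antisymm (by
        have := Finset.single_le_sum hf hj
        linarith) (hf j hj)
    have : ∑ j ∈ s, f j ^ α * g j ^ (1 - α) = 0 := by
      apply Finset.sum_eq_zero
      intro j hj
      rw [this j hj, Real.zero_rpow h0.ne', zero_mul]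
    rw [this, ← hS0, Real.zero_rpow h0.ne', zero_mul]
  rcases eq_or_lt_of_le hTnn with hT0 | hTpos
  · have : ∀ j ∈ s, g j = 0 := fun j hj =>
      le_antisymm (by
        have := Finset.single_le_sum hg hj
        linarith) (hg j hj)
    have : ∑ j ∈ s, f j ^ α * g j ^ (1 - α) = 0 := by
      apply Finset.sum_eq_zero
      intro j hj
      rw [this j hj, Real.zero_rpow h1α.ne', mul_zero]
    rw [this, ← hT0, Real.zero_rpow h1α.ne', mul_zero]
  have hkey : ∑ j ∈ s, (f j / S) ^ α * (g j / T) ^ (1 - α) ≤ 1 := by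
    calc ∑ j ∈ s, (f j / S) ^ α * (g j / T) ^ (1 - α)
        ≤ ∑ j ∈ s, (α * (f j / S) + (1 - α) * (g j / T)) := by
          apply Finset.sum_le_sum
          intro j hj
          exact Real.geom_mean_le_arith_mean2_weighted hα0 h1α.le
            (div_nonneg (hf j hj) hSnn) (div_nonneg (hg j hj) hTnn) (by ring)
      _ = α * (S / S) + (1 - α) * (T / T) := by
          rw [Finset.sum_add_distrib, ← Finset.mul_sum, ← Finset.mul_sum,
            ← Finset.sum_div, ← Finset.sum_div]
      _ = 1 := by
          rw [div_self hSpos.ne', div_self hTpos.ne']; ring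
  have hrw : ∀ j ∈ s, (f j / S) ^ α * (g j / T) ^ (1 - α) =
      f j ^ α * g j ^ (1 - α) / (S ^ α * T ^ (1 - α)) := by
    intro j hj
    rw [Real.div_rpow (hf j hj) hSnn, Real.div_rpow (hg j hj) hTnn,
      div_mul_div_comm]
  rw [Finset.sum_congr rfl hrw, ← Finset.sum_div, div_le_one
    (mul_pos (Real.rpow_pos_of_pos hSpos _) (Real.rpow_pos_of_pos hTpos _))] at hkey
  simpa using hkey

/-- Two-term Hölder inequality. -/
lemma hoelder_two (a b x y : ℝ) (ha : 0 ≤ a) (hb : 0 ≤ b) (hx : 0 ≤ x) (hy : 0 ≤ y)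
    {α : ℝ} (hα0 : 0 ≤ α) (hα1 : α ≤ 1) :
    a ^ α * b ^ (1 - α) + x ^ α * y ^ (1 - α) ≤ (a + x) ^ α * (b + y) ^ (1 - α) := by
  have := hoelder_sum (Finset.univ : Finset Bool)
    (fun c => if c then a else x) (fun c => if c then b else y)
    (by intro j _; split <;> assumption)
    (by intro j _; split <;> assumption) hα0 hα1
  simpa [Fintype.sum_bool] using this

/-- For every user `i`, the SIR is log-concave along componentwise geometric
interpolation of strictly positive power vectors:
`SIR_i(p^{(α)}) ≥ SIR_i(p^{(1)})^α · SIR_i(p^{(2)})^{1−α}`. -/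
theorem SIR_log_concave {K : ℕ} (hK : 1 ≤ K)
    (A : Matrix (Fin K) (Fin K) ℝ) (C : Fin K → ℝ) (σ2 : ℝ)
    (hA : ∀ i j, 0 ≤ A i j) (hAd : ∀ i, 0 < A i i)
    (hC : ∀ i, 0 < C i) (hσ : 0 < σ2)
    (p₁ p₂ : Fin K → ℝ) (hp₁pos : ∀ i, 0 < p₁ i) (hp₂pos : ∀ i, 0 < p₂ i)
    (α : ℝ) (hα0 : 0 ≤ α) (hα1 : α ≤ 1) (i : Fin K) :
    SIR A C σ2 p₁ i ^ α * SIR A C σ2 p₂ i ^ (1 - α) ≤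
      SIR A C σ2 (fun j => p₁ j ^ α * p₂ j ^ (1 - α)) i := by
  have hCσ : 0 < C i * σ2 := mul_pos (hC i) hσ
  set s := Finset.univ.erase i with hs
  set D₁ := (∑ j ∈ s, A i j * p₁ j) + C i * σ2 with hD₁
  set D₂ := (∑ j ∈ s, A i j * p₂ j) + C i * σ2 with hD₂
  set Dα := (∑ j ∈ s, A i j * (p₁ j ^ α * p₂ j ^ (1 - α))) + C i * σ2 with hDα
  have hsum1 : 0 ≤ ∑ j ∈ s, A i j * p₁ j :=
    Finset.sum_nonneg fun j _ => mul_nonneg (hA i j) (hp₁pos j).le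
  have hsum2 : 0 ≤ ∑ j ∈ s, A i j * p₂ j :=
    Finset.sum_nonneg fun j _ => mul_nonneg (hA i j) (hp₂pos j).le
  have hD₁pos : 0 < D₁ := by positivity
  have hD₂pos : 0 < D₂ := by positivity
  have hDαpos : 0 < Dα := by
    have : 0 ≤ ∑ j ∈ s, A i j * (p₁ j ^ α * p₂ j ^ (1 - α)) :=
      Finset.sum_nonneg fun j _ => mul_nonneg (hA i j)
        (mul_nonneg (Real.rpow_nonneg (hp₁pos j).le _) (Real.rpow_nonneg (hp₂pos j).le _))
    positivity
  -- Key denominator bound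
  have hden : Dα ≤ D₁ ^ α * D₂ ^ (1 - α) := by
    have hterm : ∀ j ∈ s, A i j * (p₁ j ^ α * p₂ j ^ (1 - α)) =
        (A i j * p₁ j) ^ α * (A i j * p₂ j) ^ (1 - α) := by
      intro j _
      rw [Real.mul_rpow (hA i j) (hp₁pos j).le, Real.mul_rpow (hA i j) (hp₂pos j).le]
      have : A i j ^ α * A i j ^ (1 - α) = A i j := by
        rw [← Real.rpow_add' (hA i j) (by norm_num), add_sub_cancel, Real.rpow_one]
      calc A i j * (p₁ j ^ α * p₂ j ^ (1 - α))
          = (A i j ^ α * A i j ^ (1 - α)) * (p₁ j ^ α * p₂ j ^ (1 - α)) := by rw [this]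
        _ = A i j ^ α * p₁ j ^ α * (A i j ^ (1 - α) * p₂ j ^ (1 - α)) := by ring
    have hCσrw : C i * σ2 = (C i * σ2) ^ α * (C i * σ2) ^ (1 - α) := by
      rw [← Real.rpow_add' hCσ.le (by norm_num), add_sub_cancel, Real.rpow_one]
    calc Dα = (∑ j ∈ s, (A i j * p₁ j) ^ α * (A i j * p₂ j) ^ (1 - α))
          + (C i * σ2) ^ α * (C i * σ2) ^ (1 - α) := by
          rw [hDα, Finset.sum_congr rfl hterm, ← hCσrw]
      _ ≤ (∑ j ∈ s, A i j * p₁ j) ^ α * (∑ j ∈ s, A i j * p₂ j) ^ (1 - α)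
          + (C i * σ2) ^ α * (C i * σ2) ^ (1 - α) := by
          gcongr
          exact hoelder_sum s _ _ (fun j _ => mul_nonneg (hA i j) (hp₁pos j).le)
            (fun j _ => mul_nonneg (hA i j) (hp₂pos j).le) hα0 hα1
      _ ≤ D₁ ^ α * D₂ ^ (1 - α) :=
          hoelder_two _ _ _ _ hsum1 hsum2 hCσ.le hCσ.le hα0 hα1
  -- Numerator identity
  have hN : A i i * (p₁ i ^ α * p₂ i ^ (1 - α)) =
      (A i i * p₁ i) ^ α * (A i i * p₂ i) ^ (1 - α) := by
    rw [Real.mul_rpow (hAd i).le (hp₁pos i).le, Real.mul_rpow (hAd i).le (hp₂pos i).le]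
    have : A i i ^ α * A i i ^ (1 - α) = A i i := by
      rw [← Real.rpow_add (hAd i), add_sub_cancel, Real.rpow_one]
    calc A i i * (p₁ i ^ α * p₂ i ^ (1 - α))
        = (A i i ^ α * A i i ^ (1 - α)) * (p₁ i ^ α * p₂ i ^ (1 - α)) := by rw [this]
      _ = A i i ^ α * p₁ i ^ α * (A i i ^ (1 - α) * p₂ i ^ (1 - α)) := by ring
  have hN1 : 0 ≤ A i i * p₁ i := mul_nonneg (hAd i).le (hp₁pos i).le
  have hN2 : 0 ≤ A i i * p₂ i := mul_nonneg (hAd i).le (hp₂pos i).le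
  have hNαnn : 0 ≤ (A i i * p₁ i) ^ α * (A i i * p₂ i) ^ (1 - α) :=
    mul_nonneg (Real.rpow_nonneg hN1 _) (Real.rpow_nonneg hN2 _)
  show (A i i * p₁ i / D₁) ^ α * (A i i * p₂ i / D₂) ^ (1 - α) ≤
      A i i * (p₁ i ^ α * p₂ i ^ (1 - α)) / Dα
  rw [hN, Real.div_rpow hN1 hD₁pos.le, Real.div_rpow hN2 hD₂pos.le, div_mul_div_comm]
  exact div_le_div_of_nonneg_left hNαnn hDαpos hden
end

section
/- Let A ∈ ℝ^{n×n} be a matrix with all entries nonnegative. If there exist vectors x ∈ ℝ^n with all components strictly positive and c ∈ ℝ^n with all components strictly positive such that (I − A)x = c, then the spectral radius of A satisfies ρ(A) < 1. -/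
open Matrix

/-- If `A` is entrywise nonnegative and `(I − A)x = c` admits a solution with
`x > 0` and `c > 0` componentwise, then the spectral radius of `A` is less
than `1`. -/
theorem spectralRadius_lt_one_of_pos_solution {n : ℕ}
    (A : Matrix (Fin n) (Fin n) ℝ) (hA : ∀ i j, 0 ≤ A i j)
    (x c : Fin n → ℝ) (hx : ∀ i, 0 < x i) (hc : ∀ i, 0 < c i)
    (hsol : (1 - A) *ᵥ x = c) :
    spectralRadius ℂ (A.map Complex.ofReal) < 1 := by
  rcases Nat.eq_zero_or_pos n with hn | hn
  · subst hn
    have hsub : Subsingleton (Matrix (Fin 0) (Fin 0) ℂ) := by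
      constructor; intro a b; ext i; exact absurd i.2 (by omega)
    have hspec : spectrum ℂ (A.map Complex.ofReal) = ∅ := by
      ext μ
      simp only [spectrum.mem_iff, Set.mem_empty_iff_false, iff_false, not_not]
      exact isUnit_of_subsingleton _
    rw [spectralRadius, hspec]
    simp
  · have : Nonempty (Fin n) := ⟨⟨0, hn⟩⟩
    letI := Matrix.linftyOpNormedRing (α := ℂ) (n := Fin n)
    letI := Matrix.linftyOpNormedAlgebra (R := ℂ) (α := ℂ) (n := Fin n)
    set B := A.map Complex.ofReal with hB
    -- the diagonal unit
    have hxne : ∀ i, (x i : ℂ) ≠ 0 := fun i => by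
      exact_mod_cast (hx i).ne'
    set d : Fin n → ℂ := fun i => (x i : ℂ) with hd
    have hmul : diagonal d * diagonal (fun i => (d i)⁻¹) = 1 := by
      rw [diagonal_mul_diagonal]
      convert diagonal_one
      exact mul_inv_cancel₀ (hxne _)
    have hmul' : diagonal (fun i => (d i)⁻¹) * diagonal d = 1 := by
      rw [diagonal_mul_diagonal]
      convert diagonal_one
      exact inv_mul_cancel₀ (hxne _)
    set u : (Matrix (Fin n) (Fin n) ℂ)ˣ := ⟨diagonal d, diagonal (fun i => (d i)⁻¹), hmul, hmul'⟩
      with hu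
    have hspec : spectralRadius ℂ B = spectralRadius ℂ ((u⁻¹ : _) * B * u) := by
      rw [spectralRadius, spectralRadius, spectrum.units_conjugate']
    -- key: (A *ᵥ x) i = x i - c i
    have hAx : ∀ i, (A *ᵥ x) i = x i - c i := by
      intro i
      have := congrFun hsol i
      simp only [sub_mulVec, one_mulVec, Pi.sub_apply] at this
      linarith
    -- bound the norm
    have hnorm : ‖((u⁻¹ : _) * B * u : Matrix (Fin n) (Fin n) ℂ)‖₊ < 1 := by
      rw [Matrix.linfty_opNNNorm_def]
      rw [Finset.sup_lt_iff (by norm_num)]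
      intro i _
      have hentry : ∀ j, ((u⁻¹ : _) * B * u : Matrix (Fin n) (Fin n) ℂ) i j
          = (d i)⁻¹ * B i j * d j := by
        intro j
        show (diagonal (fun i => (d i)⁻¹) * B * diagonal d) i j = _
        rw [Matrix.mul_diagonal, Matrix.diagonal_mul]
      have hsum : ∑ j, ‖((u⁻¹ : _) * B * u : Matrix (Fin n) (Fin n) ℂ) i j‖₊
          = ‖(x i)⁻¹ * (x i - c i)‖₊ := by
        have : ∀ j, ‖((u⁻¹ : _) * B * u : Matrix (Fin n) (Fin n) ℂ) i j‖₊
            = ‖(x i)⁻¹ * (A i j * x j)‖₊ := by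
          intro j
          rw [hentry j]
          have : (d i)⁻¹ * B i j * d j = (((x i)⁻¹ * (A i j * x j) : ℝ) : ℂ) := by
            simp [hd, hB, Matrix.map_apply, mul_assoc]
          rw [this]
          exact (Complex.nnnorm_real _)
        rw [Finset.sum_congr rfl (fun j _ => this j)]
        have hnn : ∀ j, 0 ≤ (x i)⁻¹ * (A i j * x j) := fun j =>
          mul_nonneg (inv_nonneg.mpr (hx i).le) (mul_nonneg (hA i j) (hx j).le)
        rw [Finset.sum_congr rfl (fun j _ => Real.nnnorm_of_nonneg (hnn j))]
        have hsum2 : (x i)⁻¹ * (x i - c i) = ∑ j, (x i)⁻¹ * (A i j * x j) := by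
          rw [← hAx i, Matrix.mulVec, dotProduct, Finset.mul_sum]
        have hnn2 : 0 ≤ (x i)⁻¹ * (x i - c i) := hsum2 ▸ Finset.sum_nonneg fun j _ => hnn j
        rw [Real.nnnorm_of_nonneg hnn2]
        ext
        push_cast
        rw [hsum2]
      rw [hsum]
      have hlt : (x i)⁻¹ * (x i - c i) < 1 := by
        rw [inv_mul_lt_iff₀ (hx i)]
        linarith [hc i]
      have hnn2 : 0 ≤ (x i)⁻¹ * (x i - c i) := by
        have : ∀ j, 0 ≤ (x i)⁻¹ * (A i j * x j) := fun j =>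
          mul_nonneg (inv_nonneg.mpr (hx i).le) (mul_nonneg (hA i j) (hx j).le)
        have hsum2 : (x i)⁻¹ * (x i - c i) = ∑ j, (x i)⁻¹ * (A i j * x j) := by
          rw [← hAx i, Matrix.mulVec, dotProduct, Finset.mul_sum]
        exact hsum2 ▸ Finset.sum_nonneg fun j _ => this j
      rw [Real.nnnorm_of_nonneg hnn2]
      exact_mod_cast hlt
    calc spectralRadius ℂ B = spectralRadius ℂ ((u⁻¹ : _) * B * u) := hspec
      _ ≤ ‖((u⁻¹ : _) * B * u : Matrix (Fin n) (Fin n) ℂ)‖₊ :=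
          spectrum.spectralRadius_le_nnnorm _
      _ < 1 := by exact_mod_cast hnorm
end

section
/- Let A ∈ ℝ^{n×n} be a matrix with all entries nonnegative. If c ∈ ℝ^n has all components strictly positive and there exists y ∈ ℝ^n with all components strictly positive such that (I − A)y ≥ c componentwise, then the equation (I − A)x = c has a unique solution x ∈ ℝ^n, and this solution satisfies 0 < x ≤ y componentwise. -/
open Matrix

lemma key_nonneg {n : ℕ} (A : Matrix (Fin n) (Fin n) ℝ) (hA : ∀ i j, 0 ≤ A i j)
    (y : Fin n → ℝ) (hy : ∀ i, 0 < y i) (hAy : ∀ i, (A *ᵥ y) i < y i)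
    (z : Fin n → ℝ) (hz : ∀ i, 0 ≤ ((1 - A) *ᵥ z) i) : ∀ i, 0 ≤ z i := by
  by_contra h
  push_neg at h
  obtain ⟨i, hi⟩ := h
  have hne : (Finset.univ : Finset (Fin n)).Nonempty := ⟨i, Finset.mem_univ i⟩
  obtain ⟨i0, -, hmin⟩ := Finset.exists_min_image Finset.univ (fun j => z j / y j) hne
  set t : ℝ := -(z i0 / y i0) with ht
  have hzi0 : z i0 / y i0 < 0 := by
    have h1 := hmin i (Finset.mem_univ i)
    have h2 : z i / y i < 0 := div_neg_of_neg_of_pos hi (hy i)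
    linarith
  have htpos : 0 < t := by rw [ht]; linarith
  have hzi0' : z i0 = -t * y i0 := by
    rw [ht]; field_simp; rw [mul_div_assoc, div_self (hy i0).ne', mul_one]
  have hbound : ∀ j, -t * y j ≤ z j := by
    intro j
    have h1 : -t ≤ z j / y j := by
      have := hmin j (Finset.mem_univ j)
      rw [ht]; linarith
    calc -t * y j ≤ (z j / y j) * y j := mul_le_mul_of_nonneg_right h1 (hy j).le
      _ = z j := by rw [div_mul_eq_mul_div, mul_div_assoc, div_self (hy j).ne', mul_one]
  have hAz : -t * (A *ᵥ y) i0 ≤ (A *ᵥ z) i0 := by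
    simp only [mulVec, dotProduct]
    rw [Finset.mul_sum]
    apply Finset.sum_le_sum
    intro j _
    calc -t * (A i0 j * y j) = A i0 j * (-t * y j) := by ring
      _ ≤ A i0 j * z j := mul_le_mul_of_nonneg_left (hbound j) (hA i0 j)
  have hstrict : -t * y i0 < -t * (A *ᵥ y) i0 :=
    mul_lt_mul_of_neg_left (hAy i0) (by linarith)
  have hz0 : (A *ᵥ z) i0 ≤ z i0 := by
    have h := hz i0
    rw [sub_mulVec, one_mulVec] at h
    simp only [Pi.sub_apply] at h
    linarith
  linarith [hzi0' ▸ hz0]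

/-- If `A` is entrywise nonnegative, `c > 0` componentwise, and there exists
`y > 0` with `(I − A)y ≥ c` componentwise, then `(I − A)x = c` has a unique
solution `x`, and it satisfies `0 < x ≤ y` componentwise. -/
theorem unique_solution_dominated {n : ℕ}
    (A : Matrix (Fin n) (Fin n) ℝ) (hA : ∀ i j, 0 ≤ A i j)
    (c y : Fin n → ℝ) (hc : ∀ i, 0 < c i) (hy : ∀ i, 0 < y i)
    (hyc : ∀ i, c i ≤ ((1 - A) *ᵥ y) i) :
    (∃! x : Fin n → ℝ, (1 - A) *ᵥ x = c) ∧
    ∀ x : Fin n → ℝ, (1 - A) *ᵥ x = c → ∀ i, 0 < x i ∧ x i ≤ y i := by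
  have hAy : ∀ i, (A *ᵥ y) i < y i := by
    intro i
    have h := hyc i
    rw [sub_mulVec, one_mulVec] at h
    simp only [Pi.sub_apply] at h
    have := hc i
    linarith
  have hinj : Function.Injective (1 - A).mulVecLin := by
    rw [← LinearMap.ker_eq_bot, LinearMap.ker_eq_bot']
    intro z hz0
    have hz0' : (1 - A) *ᵥ z = 0 := hz0
    have h1 : ∀ i, 0 ≤ z i :=
      key_nonneg A hA y hy hAy z (by simp [hz0'])
    have h2 : ∀ i, 0 ≤ -z i :=
      key_nonneg A hA y hy hAy (-z) (by simp [mulVec_neg, hz0'])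
    funext i
    have := h2 i
    simp only [Pi.zero_apply]
    linarith [h1 i]
  have hsurj : Function.Surjective (1 - A).mulVecLin :=
    (LinearMap.injective_iff_surjective).mp hinj
  obtain ⟨x0, hx0⟩ := hsurj c
  have hx0' : (1 - A) *ᵥ x0 = c := hx0
  have hbounds : ∀ x : Fin n → ℝ, (1 - A) *ᵥ x = c → ∀ i, 0 < x i ∧ x i ≤ y i := by
    intro x hx i
    have hx_nonneg : ∀ i, 0 ≤ x i :=
      key_nonneg A hA y hy hAy x (by rw [hx]; exact fun j => (hc j).le)
    have hle : x i ≤ y i := by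
      have h := key_nonneg A hA y hy hAy (y - x) ?_ i
      · simp only [Pi.sub_apply] at h
        linarith
      · intro j
        rw [mulVec_sub, hx]
        simp only [Pi.sub_apply]
        linarith [hyc j]
    have hAx : 0 ≤ (A *ᵥ x) i := by
      simp only [mulVec, dotProduct]
      exact Finset.sum_nonneg fun j _ => mul_nonneg (hA i j) (hx_nonneg j)
    have hxi : x i - (A *ᵥ x) i = c i := by
      have := congrFun hx i
      rw [sub_mulVec, one_mulVec] at this
      simpa using this
    exact ⟨by linarith [hc i], hle⟩
  refine ⟨⟨x0, hx0', fun x' hx' => hinj ?_⟩, hbounds⟩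
  show (1 - A) *ᵥ x' = (1 - A) *ᵥ x0
  rw [hx', hx0']
end

section
/- If there exists p ∈ ℝ^K with all components strictly positive satisfying [I − diag(γ)B] p ≥ diag(γ)τ componentwise, then there exists a unique p* ∈ ℝ^K satisfying [I − diag(γ)B] p* = diag(γ)τ, and this p* satisfies 0 < p* ≤ p componentwise. -/
open Matrix BigOperators

/-- The normalized interference matrix `B`: `b_{ij} = A_{ij}/A_{ii}` for `i ≠ j`,
`b_{ii} = 0`. -/
noncomputable def Bmat {K : ℕ} (A : Matrix (Fin K) (Fin K) ℝ) :
    Matrix (Fin K) (Fin K) ℝ :=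
  Matrix.of fun i j => if i = j then 0 else A i j / A i i

/-- The normalized noise vector `τ`: `τ_i = C_{ii} σ² / A_{ii}`. -/
noncomputable def tauVec {K : ℕ} (A : Matrix (Fin K) (Fin K) ℝ) (C : Fin K → ℝ)
    (σ2 : ℝ) : Fin K → ℝ :=
  fun i => C i * σ2 / A i i

/-!
Write `M = diag(γ) B` and `c = diag(γ) τ`; `M` is entrywise nonnegative and `c` is strictly
positive, so the feasible `p` satisfies `M p < p` componentwise. Such a `p` makes `I - M`
inverse-positive: if `(I - M) x ≥ 0` and `x` had a negative entry, then at an index `k`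
minimising `x k / p k = s < 0` we would get `x k ≥ (M x) k ≥ s (M p) k > s p k = x k`.
Hence `I - M` is monotone, so injective, so invertible; the solution `q` of `(I - M) q = c`
is positive since `q = c + M q` with `q ≥ 0`, and `q ≤ p` since `(I - M) q ≤ (I - M) p`.
-/

namespace Matrix

variable {ι : Type*} [Fintype ι] {M : Matrix ι ι ℝ} {p : ι → ℝ}

theorem mulVec_nonneg (hM : ∀ i j, 0 ≤ M i j) {x : ι → ℝ} (hx : 0 ≤ x) : 0 ≤ M *ᵥ x :=
  fun i => Finset.sum_nonneg fun j _ => mul_nonneg (hM i j) (hx j)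

variable [DecidableEq ι]

theorem one_sub_mulVec_apply (M : Matrix ι ι ℝ) (x : ι → ℝ) (i : ι) :
    ((1 - M) *ᵥ x) i = x i - (M *ᵥ x) i := by
  rw [sub_mulVec, one_mulVec, Pi.sub_apply]

theorem nonneg_of_nonneg_one_sub_mulVec (hM : ∀ i j, 0 ≤ M i j) (hp : ∀ i, 0 < p i)
    (hMp : ∀ i, (M *ᵥ p) i < p i) {x : ι → ℝ} (hx : 0 ≤ (1 - M) *ᵥ x) : 0 ≤ x := by
  intro i
  obtain ⟨k, -, hk⟩ :=
    Finset.exists_min_image Finset.univ (fun j => x j / p j) ⟨i, Finset.mem_univ i⟩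
  set s := x k / p k
  have hlow : ∀ j, s * p j ≤ x j := fun j => (le_div_iff₀ (hp j)).1 (hk j (Finset.mem_univ j))
  suffices 0 ≤ s from (mul_nonneg this (hp i).le).trans (hlow i)
  by_contra! hs
  have hxk : s * p k = x k := div_mul_cancel₀ _ (hp k).ne'
  have hMx : s * (M *ᵥ p) k ≤ (M *ᵥ x) k := by
    rw [mulVec, dotProduct, Finset.mul_sum]
    refine Finset.sum_le_sum fun j _ => ?_
    rw [mul_left_comm]
    exact mul_le_mul_of_nonneg_left (hlow j) (hM k j)
  have hxMx : (M *ᵥ x) k ≤ x k := sub_nonneg.1 ((one_sub_mulVec_apply M x k).symm ▸ hx k)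
  linarith [mul_lt_mul_of_neg_left (hMp k) hs]

theorem le_of_one_sub_mulVec_le (hM : ∀ i j, 0 ≤ M i j) (hp : ∀ i, 0 < p i)
    (hMp : ∀ i, (M *ᵥ p) i < p i) {x y : ι → ℝ} (hxy : (1 - M) *ᵥ x ≤ (1 - M) *ᵥ y) :
    x ≤ y :=
  sub_nonneg.1 <| nonneg_of_nonneg_one_sub_mulVec hM hp hMp <| by
    rwa [mulVec_sub, sub_nonneg]

theorem isUnit_one_sub (hM : ∀ i j, 0 ≤ M i j) (hp : ∀ i, 0 < p i)
    (hMp : ∀ i, (M *ᵥ p) i < p i) : IsUnit (1 - M) :=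
  mulVec_injective_iff_isUnit.1 fun _ _ hxy =>
    le_antisymm (le_of_one_sub_mulVec_le hM hp hMp hxy.le)
      (le_of_one_sub_mulVec_le hM hp hMp hxy.ge)

theorem pos_of_one_sub_mulVec_eq (hM : ∀ i j, 0 ≤ M i j) (hp : ∀ i, 0 < p i)
    (hMp : ∀ i, (M *ᵥ p) i < p i) {c q : ι → ℝ} (hc : ∀ i, 0 < c i)
    (hq : (1 - M) *ᵥ q = c) (i : ι) : 0 < q i := by
  have hq0 : 0 ≤ q := nonneg_of_nonneg_one_sub_mulVec hM hp hMp (hq ▸ fun i => (hc i).le)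
  have hMq : 0 ≤ (M *ᵥ q) i := mulVec_nonneg hM hq0 i
  have hqi := one_sub_mulVec_apply M q i
  rw [hq] at hqi
  linarith [hc i]

end Matrix

theorem Bmat_nonneg {K : ℕ} {A : Matrix (Fin K) (Fin K) ℝ} (hA : ∀ i j, 0 ≤ A i j)
    (i j : Fin K) : 0 ≤ Bmat A i j := by
  rw [Bmat, of_apply]
  split_ifs
  · exact le_rfl
  · exact div_nonneg (hA i j) (hA i i)

theorem tauVec_pos {K : ℕ} {A : Matrix (Fin K) (Fin K) ℝ} {C : Fin K → ℝ} {σ2 : ℝ}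
    (hAd : ∀ i, 0 < A i i) (hC : ∀ i, 0 < C i) (hσ : 0 < σ2) (i : Fin K) :
    0 < tauVec A C σ2 i :=
  div_pos (mul_pos (hC i) hσ) (hAd i)

theorem unique_min_solution_of_feasible_general {K : ℕ}
    (A : Matrix (Fin K) (Fin K) ℝ) (C : Fin K → ℝ) (σ2 : ℝ) (γ : Fin K → ℝ)
    (hA : ∀ i j, 0 ≤ A i j) (hAd : ∀ i, 0 < A i i)
    (hC : ∀ i, 0 < C i) (hσ : 0 < σ2) (hγ : ∀ i, 0 < γ i)
    (p : Fin K → ℝ) (hp : ∀ i, 0 < p i)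
    (hineq : ∀ i, ((Matrix.diagonal γ) *ᵥ tauVec A C σ2) i ≤
      ((1 - Matrix.diagonal γ * Bmat A) *ᵥ p) i) :
    (∃! q : Fin K → ℝ,
      (1 - Matrix.diagonal γ * Bmat A) *ᵥ q = (Matrix.diagonal γ) *ᵥ tauVec A C σ2) ∧
    ∀ q : Fin K → ℝ,
      (1 - Matrix.diagonal γ * Bmat A) *ᵥ q = (Matrix.diagonal γ) *ᵥ tauVec A C σ2 →
      ∀ i, 0 < q i ∧ q i ≤ p i := by
  have hM : ∀ i j, 0 ≤ (diagonal γ * Bmat A) i j := fun i j => by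
    rw [diagonal_mul]
    exact mul_nonneg (hγ i).le (Bmat_nonneg hA i j)
  have hc : ∀ i, 0 < (diagonal γ *ᵥ tauVec A C σ2) i := fun i => by
    rw [mulVec_diagonal]
    exact mul_pos (hγ i) (tauVec_pos hAd hC hσ i)
  set M := diagonal γ * Bmat A
  set c := diagonal γ *ᵥ tauVec A C σ2
  have hMp : ∀ i, (M *ᵥ p) i < p i := fun i => by
    linarith [hineq i, hc i, one_sub_mulVec_apply M p i]
  have hunit := isUnit_one_sub hM hp hMp
  obtain ⟨q, hq⟩ := mulVec_surjective_iff_isUnit.2 hunit c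
  refine ⟨⟨q, hq, fun r hr => mulVec_injective_iff_isUnit.2 hunit (hr.trans hq.symm)⟩, ?_⟩
  intro r hr i
  exact ⟨pos_of_one_sub_mulVec_eq hM hp hMp hc hr i,
    le_of_one_sub_mulVec_le hM hp hMp (hr ▸ hineq) i⟩

/-- If the system `[I − diag(γ)B] p ≥ diag(γ)τ` has a strictly positive solution
`p`, then the equation `[I − diag(γ)B] p* = diag(γ)τ` has a unique solution `p*`,
which satisfies `0 < p* ≤ p` componentwise. -/
theorem unique_min_solution_of_feasible {K : ℕ} (hK : 1 ≤ K)
    (A : Matrix (Fin K) (Fin K) ℝ) (C : Fin K → ℝ) (σ2 : ℝ) (γ : Fin K → ℝ)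
    (hA : ∀ i j, 0 ≤ A i j) (hAd : ∀ i, 0 < A i i)
    (hC : ∀ i, 0 < C i) (hσ : 0 < σ2) (hγ : ∀ i, 0 < γ i)
    (p : Fin K → ℝ) (hp : ∀ i, 0 < p i)
    (hineq : ∀ i, ((Matrix.diagonal γ) *ᵥ tauVec A C σ2) i ≤
      ((1 - Matrix.diagonal γ * Bmat A) *ᵥ p) i) :
    (∃! q : Fin K → ℝ,
      (1 - Matrix.diagonal γ * Bmat A) *ᵥ q = (Matrix.diagonal γ) *ᵥ tauVec A C σ2) ∧
    ∀ q : Fin K → ℝ,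
      (1 - Matrix.diagonal γ * Bmat A) *ᵥ q = (Matrix.diagonal γ) *ᵥ tauVec A C σ2 →
      ∀ i, 0 < q i ∧ q i ≤ p i :=
  unique_min_solution_of_feasible_general A C σ2 γ hA hAd hC hσ hγ p hp hineq
end

section
/- If the power region P_SIR contains a vector with all components strictly positive, then there exists a unique power allocation p* ∈ ℝ^K such that SIR_i(p*) = γ_i for all i = 1,…,K and p* ≤ p componentwise for every p ∈ P_SIR; moreover all components of p* are strictly positive. -/
/-!
Write the constraints `SIR_i(p) ≥ γ_i` as `p ≥ B p + c`, with `B ≥ 0` the cross gains scaled by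
`γ_i / A_ii` and `c > 0` the scaled noise. A strictly positive feasible `p₀` satisfies `B p₀ < p₀`,
and this forces every `d` with `d ≤ B d` to be `≤ 0`: at a coordinate maximising `d_i / p₀_i`,
`d ≤ t p₀` gives `d_i ≤ t (B p₀)_i < t p₀_i = d_i` if `t > 0`. Hence `1 - B` is injective, so
`p = B p + c` has a unique solution `p*`. Taking `d = p* - p` shows `p* ≤ p` for every feasible `p`,
and `d = -p*` shows `p* ≥ 0`, whence `p* ≥ c > 0`.
-/

open Matrix BigOperators

namespace Matrix

variable {ι : Type*} [Fintype ι] {B : Matrix ι ι ℝ}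

theorem mulVec_mono_of_nonneg (hB : ∀ i j, 0 ≤ B i j) {u v : ι → ℝ} (huv : u ≤ v) :
    B *ᵥ u ≤ B *ᵥ v := fun i =>
  dotProduct_le_dotProduct_of_nonneg_left huv fun j => hB i j

theorem nonpos_of_le_mulVec (hB : ∀ i j, 0 ≤ B i j) {q : ι → ℝ} (hq : ∀ i, 0 < q i)
    (hBq : ∀ i, (B *ᵥ q) i < q i) {d : ι → ℝ} (hd : d ≤ B *ᵥ d) : d ≤ 0 := by
  intro i₁
  by_contra! hi₁
  obtain ⟨i₀, -, hmax⟩ :=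
    Finset.exists_max_image Finset.univ (fun i => d i / q i) ⟨i₁, Finset.mem_univ _⟩
  set t := d i₀ / q i₀
  have ht : 0 < t := (div_pos hi₁ (hq i₁)).trans_le (hmax i₁ (Finset.mem_univ _))
  have hdt : d ≤ t • q := fun j => (div_le_iff₀ (hq j)).mp (hmax j (Finset.mem_univ j))
  have : d i₀ < d i₀ :=
    calc d i₀ ≤ (B *ᵥ d) i₀ := hd i₀
      _ ≤ (B *ᵥ (t • q)) i₀ := mulVec_mono_of_nonneg hB hdt i₀
      _ = t * (B *ᵥ q) i₀ := by rw [mulVec_smul]; rfl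
      _ < t * q i₀ := mul_lt_mul_of_pos_left (hBq i₀) ht
      _ = d i₀ := div_mul_cancel₀ _ (hq i₀).ne'
  exact this.false

theorem le_of_mulVec_add_eq_self (hB : ∀ i j, 0 ≤ B i j) {q : ι → ℝ} (hq : ∀ i, 0 < q i)
    (hBq : ∀ i, (B *ᵥ q) i < q i) {c x p : ι → ℝ} (hx : B *ᵥ x + c = x)
    (hp : B *ᵥ p + c ≤ p) : x ≤ p := by
  refine sub_nonpos.mp (nonpos_of_le_mulVec hB hq hBq ?_)
  calc x - p ≤ B *ᵥ x + c - (B *ᵥ p + c) := by rw [hx]; exact sub_le_sub_left hp x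
    _ = B *ᵥ (x - p) := by rw [mulVec_sub]; abel

theorem eq_of_mulVec_add_eq_self (hB : ∀ i j, 0 ≤ B i j) {q : ι → ℝ} (hq : ∀ i, 0 < q i)
    (hBq : ∀ i, (B *ᵥ q) i < q i) {c x y : ι → ℝ} (hx : B *ᵥ x + c = x)
    (hy : B *ᵥ y + c = y) : x = y :=
  le_antisymm (le_of_mulVec_add_eq_self hB hq hBq hx hy.le)
    (le_of_mulVec_add_eq_self hB hq hBq hy hx.le)

theorem exists_mulVec_add_eq_self [DecidableEq ι] (hB : ∀ i j, 0 ≤ B i j) {q : ι → ℝ}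
    (hq : ∀ i, 0 < q i) (hBq : ∀ i, (B *ᵥ q) i < q i) (c : ι → ℝ) :
    ∃ x, B *ᵥ x + c = x := by
  have hinj : Function.Injective (1 - B).mulVec := fun u v huv => by
    rw [sub_mulVec, sub_mulVec, one_mulVec, one_mulVec] at huv
    exact eq_of_mulVec_add_eq_self hB hq hBq (c := u - B *ᵥ u) (by abel) (by rw [huv]; abel)
  obtain ⟨x, hx⟩ := mulVec_surjective_iff_isUnit.mpr (mulVec_injective_iff_isUnit.mp hinj) c
  rw [sub_mulVec, one_mulVec] at hx
  exact ⟨x, by rw [← hx]; abel⟩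

theorem pos_of_mulVec_add_eq_self (hB : ∀ i j, 0 ≤ B i j) {q : ι → ℝ} (hq : ∀ i, 0 < q i)
    (hBq : ∀ i, (B *ᵥ q) i < q i) {c x : ι → ℝ} (hc : ∀ i, 0 < c i)
    (hx : B *ᵥ x + c = x) (i : ι) : 0 < x i := by
  have hx_nonneg : 0 ≤ x := by
    refine neg_nonpos.mp (nonpos_of_le_mulVec hB hq hBq fun j => ?_)
    have hxj := congrFun hx j
    simp only [Pi.neg_apply, mulVec_neg, Pi.add_apply] at hxj ⊢
    linarith [hc j]
  rw [← hx]
  exact add_pos_of_nonneg_of_pos (by simpa using mulVec_mono_of_nonneg hB hx_nonneg i) (hc i)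

end Matrix

section SIR

variable {K : ℕ} {A : Matrix (Fin K) (Fin K) ℝ} {C : Fin K → ℝ} {σ2 : ℝ} {γ : Fin K → ℝ}

noncomputable def normalizedGain (A : Matrix (Fin K) (Fin K) ℝ) (γ : Fin K → ℝ) :
    Matrix (Fin K) (Fin K) ℝ :=
  of fun i j => if j = i then 0 else γ i / A i i * A i j

noncomputable def normalizedNoise (A : Matrix (Fin K) (Fin K) ℝ) (C : Fin K → ℝ) (σ2 : ℝ)
    (γ : Fin K → ℝ) : Fin K → ℝ :=
  fun i => γ i / A i i * (C i * σ2)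

theorem normalizedGain_nonneg (hA : ∀ i j, 0 ≤ A i j) (hAd : ∀ i, 0 < A i i)
    (hγ : ∀ i, 0 < γ i) (i j : Fin K) : 0 ≤ normalizedGain A γ i j := by
  simp only [normalizedGain, of_apply]
  split_ifs
  · exact le_rfl
  · exact mul_nonneg (div_pos (hγ i) (hAd i)).le (hA i j)

theorem normalizedNoise_pos (hAd : ∀ i, 0 < A i i) (hC : ∀ i, 0 < C i) (hσ : 0 < σ2)
    (hγ : ∀ i, 0 < γ i) (i : Fin K) : 0 < normalizedNoise A C σ2 γ i :=
  mul_pos (div_pos (hγ i) (hAd i)) (mul_pos (hC i) hσ)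

theorem normalizedGain_mulVec_add_normalizedNoise_apply (p : Fin K → ℝ) (i : Fin K) :
    (normalizedGain A γ *ᵥ p + normalizedNoise A C σ2 γ) i =
      γ i / A i i * ((∑ j ∈ Finset.univ.erase i, A i j * p j) + C i * σ2) := by
  simp [normalizedGain, normalizedNoise, mulVec_apply_eq_sum, ite_mul, Finset.sum_ite,
    Finset.filter_ne', mul_add, mul_sub, Finset.mul_sum, mul_assoc]

theorem SIR_denominator_pos (hA : ∀ i j, 0 ≤ A i j) (hC : ∀ i, 0 < C i) (hσ : 0 < σ2)
    {p : Fin K → ℝ} (hp : ∀ i, 0 ≤ p i) (i : Fin K) :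
    0 < (∑ j ∈ Finset.univ.erase i, A i j * p j) + C i * σ2 :=
  add_pos_of_nonneg_of_pos (Finset.sum_nonneg fun j _ => mul_nonneg (hA i j) (hp j))
    (mul_pos (hC i) hσ)

theorem SIR_denominator_ne_zero_of_SIR_eq {p : Fin K → ℝ} {i : Fin K} (hγ : γ i ≠ 0)
    (h : SIR A C σ2 p i = γ i) : (∑ j ∈ Finset.univ.erase i, A i j * p j) + C i * σ2 ≠ 0 :=
  fun hD => hγ (by rw [← h, SIR, hD, div_zero])

theorem le_SIR_iff {p : Fin K → ℝ} {i : Fin K} (hAd : 0 < A i i)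
    (hD : 0 < (∑ j ∈ Finset.univ.erase i, A i j * p j) + C i * σ2) :
    γ i ≤ SIR A C σ2 p i ↔ (normalizedGain A γ *ᵥ p + normalizedNoise A C σ2 γ) i ≤ p i := by
  rw [normalizedGain_mulVec_add_normalizedNoise_apply, SIR, le_div_iff₀ hD, div_mul_eq_mul_div,
    div_le_iff₀ hAd, mul_comm (p i)]

theorem SIR_eq_iff {p : Fin K → ℝ} {i : Fin K} (hAd : A i i ≠ 0)
    (hD : (∑ j ∈ Finset.univ.erase i, A i j * p j) + C i * σ2 ≠ 0) :
    SIR A C σ2 p i = γ i ↔ (normalizedGain A γ *ᵥ p + normalizedNoise A C σ2 γ) i = p i := by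
  rw [normalizedGain_mulVec_add_normalizedNoise_apply, SIR, div_eq_iff hD, div_mul_eq_mul_div,
    div_eq_iff hAd, mul_comm (p i), eq_comm]

end SIR

theorem exists_unique_min_power_general {K : ℕ}
    (A : Matrix (Fin K) (Fin K) ℝ) (C : Fin K → ℝ) (σ2 : ℝ) (γ : Fin K → ℝ)
    (hA : ∀ i j, 0 ≤ A i j) (hAd : ∀ i, 0 < A i i)
    (hC : ∀ i, 0 < C i) (hσ : 0 < σ2) (hγ : ∀ i, 0 < γ i)
    (hne : ∃ p ∈ PSIR A C σ2 γ, ∀ i, 0 < p i) :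
    (∃! pstar : Fin K → ℝ,
      (∀ i, SIR A C σ2 pstar i = γ i) ∧
      ∀ p ∈ PSIR A C σ2 γ, ∀ i, pstar i ≤ p i) ∧
    ∀ pstar : Fin K → ℝ,
      ((∀ i, SIR A C σ2 pstar i = γ i) ∧
        ∀ p ∈ PSIR A C σ2 γ, ∀ i, pstar i ≤ p i) →
      ∀ i, 0 < pstar i := by
  obtain ⟨p₀, hp₀, hp₀_pos⟩ := hne
  set B := normalizedGain A γ
  set c := normalizedNoise A C σ2 γ
  have hB := normalizedGain_nonneg hA hAd hγ
  have hc := normalizedNoise_pos hAd hC hσ hγ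
  have hsub : ∀ p ∈ PSIR A C σ2 γ, B *ᵥ p + c ≤ p := fun p ⟨hp, hpγ⟩ i =>
    (le_SIR_iff (hAd i) (SIR_denominator_pos hA hC hσ hp i)).mp (hpγ i)
  have hBp₀ : ∀ i, (B *ᵥ p₀) i < p₀ i := fun i =>
    (lt_add_of_pos_right _ (hc i)).trans_le (hsub p₀ hp₀ i)
  obtain ⟨x, hx⟩ := exists_mulVec_add_eq_self hB hp₀_pos hBp₀ c
  have hx_pos := pos_of_mulVec_add_eq_self hB hp₀_pos hBp₀ hc hx
  have hxγ : ∀ i, SIR A C σ2 x i = γ i := fun i =>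
    (SIR_eq_iff (hAd i).ne' (SIR_denominator_pos hA hC hσ (fun j => (hx_pos j).le) i).ne').mpr
      (congrFun hx i)
  have huniq : ∀ y, (∀ i, SIR A C σ2 y i = γ i) → y = x := fun y hy =>
    eq_of_mulVec_add_eq_self hB hp₀_pos hBp₀ (funext fun i => (SIR_eq_iff (hAd i).ne'
      (SIR_denominator_ne_zero_of_SIR_eq (hγ i).ne' (hy i))).mp (hy i)) hx
  refine ⟨⟨x, ⟨hxγ, fun p hp => le_of_mulVec_add_eq_self hB hp₀_pos hBp₀ hx (hsub p hp)⟩,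
    fun y hy => huniq y hy.1⟩, fun y hy => huniq y hy.1 ▸ hx_pos⟩

/-- If the power region contains a strictly positive vector, then there is a
unique power allocation `p*` attaining every SIR threshold with equality and
componentwise minimal in `P_SIR`; moreover `p*` is strictly positive. -/
theorem exists_unique_min_power {K : ℕ} (hK : 1 ≤ K)
    (A : Matrix (Fin K) (Fin K) ℝ) (C : Fin K → ℝ) (σ2 : ℝ) (γ : Fin K → ℝ)
    (hA : ∀ i j, 0 ≤ A i j) (hAd : ∀ i, 0 < A i i)
    (hC : ∀ i, 0 < C i) (hσ : 0 < σ2) (hγ : ∀ i, 0 < γ i)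
    (hne : ∃ p ∈ PSIR A C σ2 γ, ∀ i, 0 < p i) :
    (∃! pstar : Fin K → ℝ,
      (∀ i, SIR A C σ2 pstar i = γ i) ∧
      ∀ p ∈ PSIR A C σ2 γ, ∀ i, pstar i ≤ p i) ∧
    ∀ pstar : Fin K → ℝ,
      ((∀ i, SIR A C σ2 pstar i = γ i) ∧
        ∀ p ∈ PSIR A C σ2 γ, ∀ i, pstar i ≤ p i) →
      ∀ i, 0 < pstar i :=
  exists_unique_min_power_general A C σ2 γ hA hAd hC hσ hγ hne
end

section
/- Fix p_max ∈ ℝ^K with all components strictly positive and suppose the power region P_SIR contains a vector with all components strictly positive; let p* be the unique element of P_SIR with SIR_i(p*) = γ_i for all i and p* ≤ p for all p ∈ P_SIR. If p* ≤ p_max componentwise, then p* maximizes the Nash product over the feasible power region: for every p ∈ P_SIR with 0 ≤ p ≤ p_max componentwise, ∏_{i=1}^K (e^{p_{i,max}} − e^{p_i}) ≤ ∏_{i=1}^K (e^{p_{i,max}} − e^{p*_i}). -/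
open Matrix BigOperators

/-- The componentwise minimal point `p*` of the power region maximizes the Nash
product `∏ᵢ (e^{p_{i,max}} − e^{p_i})` over the feasible power region. -/
theorem pstar_maximizes_nash_product {K : ℕ} (hK : 1 ≤ K)
    (A : Matrix (Fin K) (Fin K) ℝ) (C : Fin K → ℝ) (σ2 : ℝ) (γ : Fin K → ℝ)
    (hA : ∀ i j, 0 ≤ A i j) (hAd : ∀ i, 0 < A i i)
    (hC : ∀ i, 0 < C i) (hσ : 0 < σ2) (hγ : ∀ i, 0 < γ i)
    (pmax : Fin K → ℝ) (hpmax : ∀ i, 0 < pmax i)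
    (hne : ∃ p ∈ PSIR A C σ2 γ, ∀ i, 0 < p i)
    (pstar : Fin K → ℝ) (hstar : pstar ∈ PSIR A C σ2 γ)
    (hSIR : ∀ i, SIR A C σ2 pstar i = γ i)
    (hmin : ∀ p ∈ PSIR A C σ2 γ, ∀ i, pstar i ≤ p i)
    (hle : ∀ i, pstar i ≤ pmax i) :
    ∀ p ∈ PSIR A C σ2 γ, (∀ i, p i ≤ pmax i) →
      ∏ i, (Real.exp (pmax i) - Real.exp (p i)) ≤
        ∏ i, (Real.exp (pmax i) - Real.exp (pstar i)) := by
  intro p hp hple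
  apply Finset.prod_le_prod
  · intro i _
    have := Real.exp_le_exp.2 (hple i)
    linarith
  · intro i _
    have := Real.exp_le_exp.2 (hmin p hp i)
    linarith
end

section
/- The set of logarithms of strictly positive points of the power region, L = {(log p_1,…,log p_K) : p ∈ P_SIR, p_i > 0 for all i}, is a convex subset of ℝ^K. -/
open Matrix BigOperators

/-!
In log coordinates `x = log p` the constraint `γ i ≤ SIR i` reads
`γ i * (∑_{j ≠ i} A i j * exp (x j - x i) + C i * σ2 * exp (-x i)) ≤ A i i`.
The left side is a nonnegative combination of exponentials of linear forms, hence convex,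
so each constraint cuts out a convex sublevel set and the log power region is their intersection.
-/

open Real Set

theorem ConvexOn.sum {ι E : Type*} [AddCommMonoid E] [Module ℝ E] {s : Set E}
    (hs : Convex ℝ s) (t : Finset ι) {f : ι → E → ℝ} (hf : ∀ k ∈ t, ConvexOn ℝ s (f k)) :
    ConvexOn ℝ s fun x => ∑ k ∈ t, f k x := by
  classical
  induction t using Finset.induction_on with
  | empty => simpa using convexOn_const 0 hs
  | insert k t hk ih =>
    simp_rw [Finset.sum_insert hk]
    exact (hf k (t.mem_insert_self k)).add (ih fun k hk' => hf k (Finset.mem_insert_of_mem hk'))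

theorem convexOn_mul_exp_linearMap {E : Type*} [AddCommMonoid E] [Module ℝ E] {c : ℝ}
    (hc : 0 ≤ c) (ℓ : E →ₗ[ℝ] ℝ) : ConvexOn ℝ univ fun x => c * exp (ℓ x) :=
  (convexOn_exp.comp_linearMap ℓ).smul hc

noncomputable def normalizedInterference {K : ℕ} (A : Matrix (Fin K) (Fin K) ℝ) (C : Fin K → ℝ)
    (σ2 : ℝ) (i : Fin K) (x : Fin K → ℝ) : ℝ :=
  ∑ j ∈ Finset.univ.erase i, A i j * exp (x j - x i) + C i * σ2 * exp (-x i)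

section
variable {K : ℕ} (A : Matrix (Fin K) (Fin K) ℝ) (C : Fin K → ℝ) (σ2 : ℝ) (i : Fin K)

theorem normalizedInterference_eq_div (x : Fin K → ℝ) :
    normalizedInterference A C σ2 i x
      = ((∑ j ∈ Finset.univ.erase i, A i j * exp (x j)) + C i * σ2) / exp (x i) := by
  simp only [normalizedInterference, exp_sub, exp_neg, div_eq_mul_inv, add_mul, Finset.sum_mul,
    mul_assoc]

theorem convexOn_normalizedInterference (hA : ∀ j, 0 ≤ A i j) (hCσ : 0 ≤ C i * σ2) :
    ConvexOn ℝ univ (normalizedInterference A C σ2 i) :=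
  (ConvexOn.sum convex_univ (Finset.univ.erase i) fun j _ =>
      convexOn_mul_exp_linearMap (hA j) (.proj j - .proj i : (Fin K → ℝ) →ₗ[ℝ] ℝ)).add
    (convexOn_mul_exp_linearMap hCσ (-.proj i : (Fin K → ℝ) →ₗ[ℝ] ℝ))

theorem le_SIR_exp_iff (hA : ∀ j, 0 ≤ A i j) (hCσ : 0 < C i * σ2) (γ : ℝ) (x : Fin K → ℝ) :
    γ ≤ SIR A C σ2 (fun j => exp (x j)) i ↔ γ * normalizedInterference A C σ2 i x ≤ A i i := by
  have hD : 0 < (∑ j ∈ Finset.univ.erase i, A i j * exp (x j)) + C i * σ2 :=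
    add_pos_of_nonneg_of_pos (Finset.sum_nonneg fun j _ => mul_nonneg (hA j) (exp_pos _).le) hCσ
  rw [SIR, normalizedInterference_eq_div, le_div_iff₀ hD, ← mul_div_assoc,
    div_le_iff₀ (exp_pos _)]

end

theorem image_log_eq_preimage_exp {ι : Type*} (S : Set (ι → ℝ)) :
    (fun p i => log (p i)) '' {p ∈ S | ∀ i, 0 < p i} = (fun x i => exp (x i)) ⁻¹' S := by
  ext x
  constructor
  · rintro ⟨p, ⟨hS, hp⟩, rfl⟩
    simpa only [mem_preimage, exp_log (hp _)] using hS
  · intro hx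
    exact ⟨_, ⟨hx, fun i => exp_pos (x i)⟩, funext fun i => log_exp (x i)⟩

theorem log_power_region_convex_general {K : ℕ}
    (A : Matrix (Fin K) (Fin K) ℝ) (C : Fin K → ℝ) (σ2 : ℝ) (γ : Fin K → ℝ)
    (hA : ∀ i j, 0 ≤ A i j)
    (hC : ∀ i, 0 < C i) (hσ : 0 < σ2) (hγ : ∀ i, 0 < γ i) :
    Convex ℝ ((fun p : Fin K → ℝ => fun i => Real.log (p i)) ''
      {p ∈ PSIR A C σ2 γ | ∀ i, 0 < p i}) := by
  have hCσ i : 0 < C i * σ2 := mul_pos (hC i) hσ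
  have hpreimage : (fun x i => exp (x i)) ⁻¹' PSIR A C σ2 γ
      = ⋂ i, {x | γ i * normalizedInterference A C σ2 i x ≤ A i i} := by
    ext x
    simp only [PSIR, mem_preimage, mem_ofPred_eq, mem_iInter, exp_nonneg, implies_true,
      true_and, le_SIR_exp_iff A C σ2 _ (hA _) (hCσ _)]
  rw [image_log_eq_preimage_exp, hpreimage]
  refine convex_iInter fun i => ?_
  simpa only [sep_univ, smul_eq_mul] using
    ((convexOn_normalizedInterference A C σ2 i (hA i) (hCσ i).le).smul (hγ i).le).convex_le (A i i)

/-- The set of componentwise logarithms of strictly positive points of the power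
region is convex. -/
theorem log_power_region_convex {K : ℕ} (hK : 1 ≤ K)
    (A : Matrix (Fin K) (Fin K) ℝ) (C : Fin K → ℝ) (σ2 : ℝ) (γ : Fin K → ℝ)
    (hA : ∀ i j, 0 ≤ A i j) (hAd : ∀ i, 0 < A i i)
    (hC : ∀ i, 0 < C i) (hσ : 0 < σ2) (hγ : ∀ i, 0 < γ i) :
    Convex ℝ ((fun p : Fin K → ℝ => fun i => Real.log (p i)) ''
      {p ∈ PSIR A C σ2 γ | ∀ i, 0 < p i}) :=
  log_power_region_convex_general A C σ2 γ hA hC hσ hγ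
end
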